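/- Let G be a finitely generated group with subgroups Λ and Σ. Let X and X′ be non-trivial Λ-almost invariant subsets of G such that Λ\X and Λ\X′ are almost equal, and let Y and Y′ be non-trivial Σ-almost invariant subsets of G such that Σ\Y and Σ\Y′ are almost equal. Then X crosses Y if and only if X′ crosses Y′. Consequently, the set of double cosets ΣgΛ such that gX crosses Y equals the set of double cosets ΣgΛ such that gX′ crosses Y′. -/

import Mathlib

/-!
Whether a corner `X ∩ Y` is finite does not depend on whether it is measured in `Λ\G` or in
`Σ\G`: if `Σ\(X ∩ Y)` is finite, pick `z ∈ Y` whose coset misses it (`Σ\Y` is infinite);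
every element of `X ∩ Y` is `k d` with `k ∈ Σ` and `d` in a finite set of representatives, and
`kz ∉ X` places it in one of finitely many boundaries `X \ X(z⁻¹d)`, each finite in `Λ\G` by
almost invariance. Measured in `Λ\G`, a corner changes by finitely many cosets when `X` is
replaced by `X'`, and measured in `Σ\G` when `Y` is replaced by `Y'`. For translates, `gX` is
almost invariant under the conjugate `gΛg⁻¹`, and `x ↦ gx` identifies `Λ\G` with `(gΛg⁻¹)\G`.
-/

open scoped Pointwise symmDiff

/-- The image of a subset `X ⊆ G` in the set `H\G` of right cosets `Hg`
(the quotient of `G` by the left multiplication action of `H`). -/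
def rproj {G : Type*} [Group G] (H : Subgroup G) (X : Set G) :
    Set (Quotient (QuotientGroup.rightRel H)) :=
  Quotient.mk (QuotientGroup.rightRel H) '' X

/-- Two sets are almost equal if their symmetric difference is finite. -/
def AlmostEqSets {α : Type*} (A B : Set α) : Prop :=
  (A ∆ B).Finite

/-- `X ⊆ G` is `H`-almost invariant: `hX = X` for all `h ∈ H`, and for every `g ∈ G`
the sets `(H\X)g` and `H\X` are almost equal. -/
def IsAlmostInvariant {G : Type*} [Group G] (H : Subgroup G) (X : Set G) : Prop :=
  (∀ h ∈ H, h • X = X) ∧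
    ∀ g : G, AlmostEqSets (rproj H ((fun x => x * g) '' X)) (rproj H X)

/-- `X` is a non-trivial `H`-almost invariant subset of `G`:
in addition `H\X` and `H\Xᶜ` are both infinite. -/
def IsNontrivialAlmostInvariant {G : Type*} [Group G] (H : Subgroup G) (X : Set G) : Prop :=
  IsAlmostInvariant H X ∧ (rproj H X).Infinite ∧ (rproj H Xᶜ).Infinite

/-- `X` crosses `Y`, where `Y` is `K`-almost invariant: each of the four sets
`X ∩ Y`, `Xᶜ ∩ Y`, `X ∩ Yᶜ`, `Xᶜ ∩ Yᶜ` projects to an infinite subset of `K\G`. -/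
def Crosses {G : Type*} [Group G] (K : Subgroup G) (X Y : Set G) : Prop :=
  (rproj K (X ∩ Y)).Infinite ∧ (rproj K (Xᶜ ∩ Y)).Infinite ∧
    (rproj K (X ∩ Yᶜ)).Infinite ∧ (rproj K (Xᶜ ∩ Yᶜ)).Infinite

section

open Set

variable {G : Type*} [Group G] {H K L : Subgroup G} {X X' Y Y' A B C : Set G}

def IsLeftInvariant (H : Subgroup G) (X : Set G) : Prop :=
  ∀ h ∈ H, h • X = X

theorem IsLeftInvariant.mul_mem (hX : IsLeftInvariant H X) {h x : G} (hh : h ∈ H)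
    (hx : x ∈ X) : h * x ∈ X := by
  rw [← hX h hh]
  exact smul_mem_smul_set hx

theorem IsLeftInvariant.compl (hX : IsLeftInvariant H X) : IsLeftInvariant H Xᶜ := by
  intro h hh
  rw [smul_set_compl, hX h hh]

theorem IsLeftInvariant.image_mul_right (hX : IsLeftInvariant H X) (g : G) :
    IsLeftInvariant H ((fun x => x * g) '' X) := by
  intro h hh
  conv_rhs => rw [← hX h hh]
  simp only [← image_smul, image_image, smul_eq_mul, mul_assoc]

theorem IsLeftInvariant.mk_mem_rproj_iff (hX : IsLeftInvariant H X) {x : G} :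
    Quotient.mk (QuotientGroup.rightRel H) x ∈ rproj H X ↔ x ∈ X := by
  refine ⟨?_, fun hx => mem_image_of_mem _ hx⟩
  rintro ⟨y, hy, hyx⟩
  have hxy : x * y⁻¹ ∈ H := QuotientGroup.rightRel_apply.mp (Quotient.eq.mp hyx)
  simpa using hX.mul_mem hxy hy

theorem rproj_diff (hB : IsLeftInvariant H B) (A : Set G) :
    rproj H (A \ B) = rproj H A \ rproj H B := by
  ext c
  constructor
  · rintro ⟨y, ⟨hyA, hyB⟩, rfl⟩
    exact ⟨mem_image_of_mem _ hyA, hB.mk_mem_rproj_iff.not.mpr hyB⟩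
  · rintro ⟨⟨y, hyA, rfl⟩, hyB⟩
    exact mem_image_of_mem _ ⟨hyA, fun hy => hyB (mem_image_of_mem _ hy)⟩

theorem rproj_compl (hX : IsLeftInvariant H X) : rproj H Xᶜ = (rproj H X)ᶜ := by
  ext c
  induction c using Quotient.ind
  rw [mem_compl_iff, hX.compl.mk_mem_rproj_iff, hX.mk_mem_rproj_iff, mem_compl_iff]

theorem AlmostEqSets.rproj_compl (hX : IsLeftInvariant H X) (hX' : IsLeftInvariant H X')
    (h : AlmostEqSets (rproj H X) (rproj H X')) :
    AlmostEqSets (rproj H Xᶜ) (rproj H X'ᶜ) := by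
  rwa [AlmostEqSets, _root_.rproj_compl hX, _root_.rproj_compl hX', compl_symmDiff_compl]

theorem IsAlmostInvariant.isLeftInvariant (hX : IsAlmostInvariant H X) :
    IsLeftInvariant H X :=
  hX.1

theorem IsAlmostInvariant.compl (hX : IsAlmostInvariant H X) : IsAlmostInvariant H Xᶜ := by
  refine ⟨hX.isLeftInvariant.compl, fun g => ?_⟩
  rw [image_compl_eq (Group.mulRight_bijective g)]
  exact AlmostEqSets.rproj_compl (hX.isLeftInvariant.image_mul_right g) hX.isLeftInvariant
    (hX.2 g)

theorem IsNontrivialAlmostInvariant.compl (hX : IsNontrivialAlmostInvariant H X) :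
    IsNontrivialAlmostInvariant H Xᶜ :=
  ⟨hX.1.compl, hX.2.2, by rw [compl_compl]; exact hX.2.1⟩

theorem IsAlmostInvariant.finite_rproj_diff_image_mul_right (hX : IsAlmostInvariant H X)
    (g : G) : (rproj H (X \ (fun x => x * g) '' X)).Finite := by
  rw [rproj_diff (hX.isLeftInvariant.image_mul_right g)]
  exact (hX.2 g).subset fun _ hc => mem_symmDiff.mpr (Or.inr hc)

theorem finite_rproj_inter_of_finite (hX : IsAlmostInvariant H X) (hY : IsLeftInvariant K Y)
    (hYinf : (rproj K Y).Infinite) (hfin : (rproj K (X ∩ Y)).Finite) :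
    (rproj H (X ∩ Y)).Finite := by
  obtain ⟨_, ⟨z, hzY, rfl⟩, hz⟩ := (hYinf.sdiff hfin).nonempty
  have hcover : X ∩ Y ⊆
      ⋃ d ∈ Quotient.out '' rproj K (X ∩ Y), X \ (fun x => x * (z⁻¹ * d)) '' X := by
    intro g hg
    refine mem_biUnion (mem_image_of_mem _ (mem_image_of_mem _ hg)) ⟨hg.1, ?_⟩
    have hk := QuotientGroup.rightRel_apply.mp (Quotient.mk_out (s := QuotientGroup.rightRel K) g)
    generalize (Quotient.mk (QuotientGroup.rightRel K) g).out = d at hk ⊢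
    rintro ⟨x, hxX, rfl⟩
    have hxz : x * z⁻¹ ∈ K := by simpa [mul_assoc] using hk
    have hxY : x ∈ Y := by simpa using hY.mul_mem hxz hzY
    exact hz ⟨x, ⟨hxX, hxY⟩, (Quotient.sound (QuotientGroup.rightRel_apply.mpr hxz)).symm⟩
  refine ((hfin.image Quotient.out).biUnion
    fun d _ => hX.finite_rproj_diff_image_mul_right (z⁻¹ * d)).subset ?_
  exact (image_mono hcover).trans (image_iUnion₂ _ _).subset

theorem finite_rproj_inter_iff_finite_rproj_inter (hX : IsAlmostInvariant L X) (hXinf : (rproj L X).Infinite)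
    (hY : IsAlmostInvariant K Y) (hYinf : (rproj K Y).Infinite) :
    (rproj K (X ∩ Y)).Finite ↔ (rproj L (X ∩ Y)).Finite := by
  refine ⟨finite_rproj_inter_of_finite hX hY.isLeftInvariant hYinf, fun h => ?_⟩
  rw [inter_comm] at h ⊢
  exact finite_rproj_inter_of_finite hY hX.isLeftInvariant hXinf h

theorem finite_rproj_inter_of_almostEq (hA : IsLeftInvariant H A)
    (hAB : AlmostEqSets (rproj H A) (rproj H B)) (h : (rproj H (A ∩ C)).Finite) :
    (rproj H (B ∩ C)).Finite := by
  have hcover : B ∩ C ⊆ (A ∩ C) ∪ (B \ A) := fun x hx => by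
    by_cases hxA : x ∈ A
    · exact Or.inl ⟨hxA, hx.2⟩
    · exact Or.inr ⟨hx.1, hxA⟩
  have hdiff : (rproj H (B \ A)).Finite := by
    rw [rproj_diff hA]
    exact hAB.subset fun _ hc => mem_symmDiff.mpr (Or.inr hc)
  exact ((h.union hdiff).subset ((image_mono hcover).trans (image_union _ _ _).subset))

theorem finite_rproj_inter_congr (hA : IsLeftInvariant H A) (hB : IsLeftInvariant H B)
    (hAB : AlmostEqSets (rproj H A) (rproj H B)) :
    (rproj H (A ∩ C)).Finite ↔ (rproj H (B ∩ C)).Finite :=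
  ⟨finite_rproj_inter_of_almostEq hA hAB,
    finite_rproj_inter_of_almostEq hB (by rwa [AlmostEqSets, symmDiff_comm])⟩

theorem finite_rproj_corner_congr (hX : IsAlmostInvariant L X) (hXinf : (rproj L X).Infinite)
    (hX' : IsAlmostInvariant L X') (hX'inf : (rproj L X').Infinite)
    (hY : IsAlmostInvariant K Y) (hYinf : (rproj K Y).Infinite) (hY' : IsLeftInvariant K Y')
    (hXX' : AlmostEqSets (rproj L X) (rproj L X'))
    (hYY' : AlmostEqSets (rproj K Y) (rproj K Y')) :
    (rproj K (X ∩ Y)).Finite ↔ (rproj K (X' ∩ Y')).Finite :=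
  calc (rproj K (X ∩ Y)).Finite
      ↔ (rproj L (X ∩ Y)).Finite := finite_rproj_inter_iff_finite_rproj_inter hX hXinf hY hYinf
    _ ↔ (rproj L (X' ∩ Y)).Finite := finite_rproj_inter_congr hX.isLeftInvariant hX'.isLeftInvariant hXX'
    _ ↔ (rproj K (X' ∩ Y)).Finite := (finite_rproj_inter_iff_finite_rproj_inter hX' hX'inf hY hYinf).symm
    _ ↔ (rproj K (Y ∩ X')).Finite := by rw [inter_comm]
    _ ↔ (rproj K (Y' ∩ X')).Finite := finite_rproj_inter_congr hY.isLeftInvariant hY' hYY'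
    _ ↔ (rproj K (X' ∩ Y')).Finite := by rw [inter_comm]

theorem crosses_congr (hX : IsNontrivialAlmostInvariant L X)
    (hX' : IsNontrivialAlmostInvariant L X') (hY : IsNontrivialAlmostInvariant K Y)
    (hY' : IsLeftInvariant K Y') (hXX' : AlmostEqSets (rproj L X) (rproj L X'))
    (hYY' : AlmostEqSets (rproj K Y) (rproj K Y')) :
    Crosses K X Y ↔ Crosses K X' Y' := by
  have hXXc := AlmostEqSets.rproj_compl hX.1.isLeftInvariant hX'.1.isLeftInvariant hXX'
  have hYYc := AlmostEqSets.rproj_compl hY.1.isLeftInvariant hY' hYY'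
  have corner {A A' B B'} (hA : IsNontrivialAlmostInvariant L A)
      (hA' : IsNontrivialAlmostInvariant L A') (hB : IsNontrivialAlmostInvariant K B)
      (hB' : IsLeftInvariant K B') (hAA' : AlmostEqSets (rproj L A) (rproj L A'))
      (hBB' : AlmostEqSets (rproj K B) (rproj K B')) :
      (rproj K (A ∩ B)).Infinite ↔ (rproj K (A' ∩ B')).Infinite :=
    (finite_rproj_corner_congr hA.1 hA.2.1 hA'.1 hA'.2.1 hB.1 hB.2.1 hB' hAA' hBB').not
  exact and_congr (corner hX hX' hY hY' hXX' hYY') <|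
    and_congr (corner hX.compl hX'.compl hY hY' hXXc hYY') <|
    and_congr (corner hX hX' hY.compl hY'.compl hXX' hYYc)
      (corner hX.compl hX'.compl hY.compl hY'.compl hXXc hYYc)

theorem AlmostEqSets.image {α β : Type*} {f : α → β} (hf : Function.Injective f)
    {A B : Set α} (h : AlmostEqSets A B) : AlmostEqSets (f '' A) (f '' B) := by
  rw [AlmostEqSets, ← image_symmDiff hf]
  exact Set.Finite.image f h

def rightCosetsConjEquiv (g : G) (L : Subgroup G) :
    Quotient (QuotientGroup.rightRel L) ≃
      Quotient (QuotientGroup.rightRel (MulAut.conj g • L)) :=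
  Quotient.congr (Equiv.mulLeft g) fun a b => by
    rw [QuotientGroup.rightRel_apply, QuotientGroup.rightRel_apply, Equiv.coe_mulLeft,
      mul_inv_rev, ← mul_assoc, mul_assoc _ b, ← MulAut.conj_apply, ← MulAut.smul_def,
      Subgroup.smul_mem_pointwise_smul_iff]

theorem rproj_smul (g : G) (L : Subgroup G) (Z : Set G) :
    rproj (MulAut.conj g • L) (g • Z) = rightCosetsConjEquiv g L '' rproj L Z := by
  simp only [rproj, ← image_smul, image_image]
  rfl

theorem IsLeftInvariant.smul (hX : IsLeftInvariant L X) (g : G) :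
    IsLeftInvariant (MulAut.conj g • L) (g • X) := by
  intro h hh
  obtain ⟨l, hl, rfl⟩ := (Subgroup.mem_smul_pointwise_iff_exists _ _ _).mp hh
  rw [MulAut.smul_def, MulAut.conj_apply, smul_smul, inv_mul_cancel_right, mul_smul, hX l hl]

theorem IsNontrivialAlmostInvariant.smul (hX : IsNontrivialAlmostInvariant L X) (g : G) :
    IsNontrivialAlmostInvariant (MulAut.conj g • L) (g • X) := by
  have hinj := (rightCosetsConjEquiv g L).injective
  refine ⟨⟨hX.1.isLeftInvariant.smul g, fun a => ?_⟩, ?_, ?_⟩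
  · have hcomm : (fun x => x * a) '' (g • X) = g • (fun x => x * a) '' X := by
      simp only [← image_smul, image_image, smul_eq_mul, mul_assoc]
    rw [hcomm, rproj_smul, rproj_smul]
    exact (hX.1.2 a).image hinj
  · rw [rproj_smul]
    exact hX.2.1.image hinj.injOn
  · rw [← smul_set_compl, rproj_smul]
    exact hX.2.2.image hinj.injOn

theorem AlmostEqSets.rproj_smul (h : AlmostEqSets (rproj L X) (rproj L X')) (g : G) :
    AlmostEqSets (rproj (MulAut.conj g • L) (g • X)) (rproj (MulAut.conj g • L) (g • X')) := by
  rw [_root_.rproj_smul, _root_.rproj_smul]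
  exact h.image (rightCosetsConjEquiv g L).injective

end

theorem crossing_depends_only_on_almost_equality_class_general {G : Type*} [Group G]
    (L K : Subgroup G) (X X' Y Y' : Set G)
    (hX : IsNontrivialAlmostInvariant L X) (hX' : IsNontrivialAlmostInvariant L X')
    (hY : IsNontrivialAlmostInvariant K Y) (hY' : IsNontrivialAlmostInvariant K Y')
    (hXX' : AlmostEqSets (rproj L X) (rproj L X'))
    (hYY' : AlmostEqSets (rproj K Y) (rproj K Y')) :
    (Crosses K X Y ↔ Crosses K X' Y') ∧
    DoubleCoset.mk K L '' {g : G | Crosses K (g • X) Y}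
      = DoubleCoset.mk K L '' {g : G | Crosses K (g • X') Y'} := by
  have hcross (g : G) : Crosses K (g • X) Y ↔ Crosses K (g • X') Y' :=
    crosses_congr (hX.smul g) (hX'.smul g) hY hY'.1.isLeftInvariant (hXX'.rproj_smul g) hYY'
  exact ⟨crosses_congr hX hX' hY hY'.1.isLeftInvariant hXX' hYY', congrArg _ (Set.ext hcross)⟩

theorem crossing_depends_only_on_almost_equality_class {G : Type*} [Group G] [Group.FG G]
    (L K : Subgroup G) (X X' Y Y' : Set G)
    (hX : IsNontrivialAlmostInvariant L X) (hX' : IsNontrivialAlmostInvariant L X')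
    (hY : IsNontrivialAlmostInvariant K Y) (hY' : IsNontrivialAlmostInvariant K Y')
    (hXX' : AlmostEqSets (rproj L X) (rproj L X'))
    (hYY' : AlmostEqSets (rproj K Y) (rproj K Y')) :
    (Crosses K X Y ↔ Crosses K X' Y') ∧
    DoubleCoset.mk K L '' {g : G | Crosses K (g • X) Y}
      = DoubleCoset.mk K L '' {g : G | Crosses K (g • X') Y'} :=
  crossing_depends_only_on_almost_equality_class_general L K X X' Y Y' hX hX' hY hY' hXX' hYY'
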